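/- If φ and ψ are finite potent endomorphisms of a k-vector space V that commute with each other, and φ + ψ is finite potent, then tr_V(φ + ψ) = tr_V(φ) + tr_V(ψ). (Consequently, in any counter-example to additivity of Tate's trace, the two endomorphisms cannot commute.) -/

import Mathlib

/-- An endomorphism is finite potent if some power has finite-dimensional range. -/
def IsFinitePotent {k V : Type*} [Field k] [AddCommGroup V] [Module k V]
    (φ : V →ₗ[k] V) : Prop :=
  ∃ n : ℕ, FiniteDimensional k (LinearMap.range (φ ^ n))

/-- `c` is a value of Tate's trace of `φ`: the ordinary trace of the restriction of `φ` to
any finite-dimensional `φ`-invariant subspace `W` with `φⁿ V ⊆ W` for some `n` equals `c`. -/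
def TateTraceSpec {k V : Type*} [Field k] [AddCommGroup V] [Module k V]
    (φ : V →ₗ[k] V) (c : k) : Prop :=
  ∀ (W : Submodule k V) (hW : ∀ x ∈ W, φ x ∈ W), FiniteDimensional k W →
    (∃ n : ℕ, LinearMap.range (φ ^ n) ≤ W) →
    LinearMap.trace k W (φ.restrict hW) = c

open Classical in
/-- Tate's trace of a finite potent endomorphism. -/
noncomputable def tateTrace {k V : Type*} [Field k] [AddCommGroup V] [Module k V]
    (φ : V →ₗ[k] V) : k :=
  if h : ∃ c, TateTraceSpec φ c then h.choose else 0


/-! If `W₁ ⊆ W₂` are finite-dimensional `φ`-invariant subspaces with `φⁿ V ⊆ W₁`, then `φ` is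
nilpotent on `W₂ / W₁`, so the traces of `φ` on `W₁` and on `W₂` agree; comparing with `W₁ + W₂`
shows that Tate's trace is the trace on any such subspace. For commuting `φ` and `ψ` the space
`W = φⁿ V + ψᵐ V` is invariant under both, and the binomial theorem gives `(φ + ψ)ⁿ⁺ᵐ V ⊆ W`, so
all three Tate traces are ordinary traces on the same `W`, where the trace is additive. -/

section TraceRestrict

variable {k M : Type*} [Field k] [AddCommGroup M] [Module k M]

lemma pow_apply_sub_pow_apply_mem {f g : Module.End k M} {U : Submodule k M}
    (hU : ∀ x ∈ U, f x ∈ U) (hfg : ∀ x, f x - g x ∈ U) (m : ℕ) (x : M) :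
    (f ^ m) x - (g ^ m) x ∈ U := by
  induction m with
  | zero => simp
  | succ m ih =>
    have h : (f ^ (m + 1)) x - (g ^ (m + 1)) x =
        f ((f ^ m) x - (g ^ m) x) + (f ((g ^ m) x) - g ((g ^ m) x)) := by
      simp only [pow_succ', Module.End.mul_apply, map_sub]
      abel
    rw [h]
    exact U.add_mem (hU _ ih) (hfg _)

lemma pow_succ_eq_zero_of_sub_mem {f g : Module.End k M} {U : Submodule k M}
    (hU : ∀ x ∈ U, f x ∈ U) (hfg : ∀ x, f x - g x ∈ U) (hg : ∀ x ∈ U, g x = 0) {n : ℕ}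
    (hn : LinearMap.range (f ^ n) ≤ U) : g ^ (n + 1) = 0 := by
  ext x
  have hgn : (g ^ n) x ∈ U := by
    simpa using
      U.sub_mem (hn (LinearMap.mem_range_self _ x)) (pow_apply_sub_pow_apply_mem hU hfg n x)
  rw [pow_succ', Module.End.mul_apply, hg _ hgn, LinearMap.zero_apply]

/-- With `q` a projection onto `U`, `f = f q + f (1 - q)`; the first summand has the trace of
`f` on `U`, and the second one has the trace of the nilpotent map `(1 - q) f`, which is zero. -/
lemma trace_restrict_eq_of_range_pow_le [FiniteDimensional k M] {f : Module.End k M}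
    {U : Submodule k M} (hU : ∀ x ∈ U, f x ∈ U) {n : ℕ} (hn : LinearMap.range (f ^ n) ≤ U) :
    LinearMap.trace k U (f.restrict hU) = LinearMap.trace k M f := by
  obtain ⟨C, hC⟩ := U.exists_isCompl
  set q := U.projection C hC
  have hfq : (f * q).restrict (fun x _ => hU _ (U.projection_apply_mem hC x)) = f.restrict hU := by
    ext x
    simp [q, U.projection_apply_of_mem_left hC x.2]
  have hnil : IsNilpotent ((1 - q) * f) := by
    refine ⟨n + 1, pow_succ_eq_zero_of_sub_mem hU (fun x => ?_) (fun x hx => ?_) hn⟩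
    · simp [q]
    · simp [q, U.projection_apply_of_mem_left hC (hU x hx)]
  calc LinearMap.trace k U (f.restrict hU) = LinearMap.trace k M (f * q) := by
        rw [← hfq, LinearMap.trace_restrict_eq_of_forall_mem]
    _ = LinearMap.trace k M (f * q) + LinearMap.trace k M ((1 - q) * f) := by
        rw [(LinearMap.isNilpotent_trace_of_isNilpotent hnil).eq_zero, add_zero]
    _ = LinearMap.trace k M f := by
        rw [LinearMap.trace_mul_comm k (1 - q) f, ← map_add, ← mul_add, add_sub_cancel, mul_one]

end TraceRestrict

section TateTrace

variable {k V : Type*} [Field k] [AddCommGroup V] [Module k V]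

lemma trace_restrict_eq_of_le {φ : Module.End k V} {W₁ W₂ : Submodule k V} (hle : W₁ ≤ W₂)
    (h₁ : ∀ x ∈ W₁, φ x ∈ W₁) (h₂ : ∀ x ∈ W₂, φ x ∈ W₂) [FiniteDimensional k W₂] {n : ℕ}
    (hn : LinearMap.range (φ ^ n) ≤ W₁) :
    LinearMap.trace k W₁ (φ.restrict h₁) = LinearMap.trace k W₂ (φ.restrict h₂) := by
  have hU : ∀ x ∈ W₁.comap W₂.subtype, φ.restrict h₂ x ∈ W₁.comap W₂.subtype :=
    fun x hx => h₁ x hx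
  have hnU : LinearMap.range (φ.restrict h₂ ^ n) ≤ W₁.comap W₂.subtype := by
    rintro _ ⟨x, rfl⟩
    rw [Submodule.mem_comap, Module.End.pow_restrict, Submodule.subtype_apply,
      LinearMap.coe_restrict_apply]
    exact hn (LinearMap.mem_range_self _ _)
  have hconj : (Submodule.comapSubtypeEquivOfLe hle).conj ((φ.restrict h₂).restrict hU) =
      φ.restrict h₁ := by
    ext x
    rfl
  rw [← hconj, LinearMap.trace_conj', trace_restrict_eq_of_range_pow_le hU hnU]

lemma tateTraceSpec_trace_restrict {φ : Module.End k V} {W : Submodule k V}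
    (hW : ∀ x ∈ W, φ x ∈ W) [FiniteDimensional k W] {n : ℕ} (hn : LinearMap.range (φ ^ n) ≤ W) :
    TateTraceSpec φ (LinearMap.trace k W (φ.restrict hW)) := by
  intro W' hW' _ ⟨m, hm⟩
  have hsup : ∀ x ∈ W ⊔ W', φ x ∈ W ⊔ W' :=
    Module.End.invtSubmodule.sup_mem (f := φ) hW hW'
  rw [trace_restrict_eq_of_le le_sup_left hW hsup hn,
    trace_restrict_eq_of_le le_sup_right hW' hsup hm]

lemma tateTrace_eq_trace_restrict {φ : Module.End k V} {W : Submodule k V}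
    (hW : ∀ x ∈ W, φ x ∈ W) [FiniteDimensional k W] {n : ℕ} (hn : LinearMap.range (φ ^ n) ≤ W) :
    tateTrace φ = LinearMap.trace k W (φ.restrict hW) := by
  have h : ∃ c, TateTraceSpec φ c := ⟨_, tateTraceSpec_trace_restrict hW hn⟩
  rw [tateTrace, dif_pos h]
  exact (h.choose_spec W hW inferInstance ⟨n, hn⟩).symm

lemma mapsTo_range_of_commute {φ g : Module.End k V} (h : Commute φ g) :
    ∀ x ∈ LinearMap.range g, φ x ∈ LinearMap.range g := by
  rintro _ ⟨y, rfl⟩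
  exact ⟨φ y, congr($h.eq y).symm⟩

lemma range_add_pow_le_sup {φ ψ : Module.End k V} (h : Commute φ ψ) (n m : ℕ) :
    LinearMap.range ((φ + ψ) ^ (n + m)) ≤ LinearMap.range (φ ^ n) ⊔ LinearMap.range (ψ ^ m) := by
  have hterm : ∀ i j, i + j = n + m →
      LinearMap.range (φ ^ i * ψ ^ j) ≤ LinearMap.range (φ ^ n) ⊔ LinearMap.range (ψ ^ m) := by
    intro i j hij
    rcases le_or_gt n i with hi | hi
    · obtain ⟨i, rfl⟩ := Nat.exists_eq_add_of_le hi
      rw [pow_add, mul_assoc]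
      exact (LinearMap.range_comp_le_range _ _).trans le_sup_left
    · obtain ⟨j, rfl⟩ := Nat.exists_eq_add_of_le (show m ≤ j by omega)
      rw [pow_add, ← mul_assoc, (h.pow_pow i m).eq, mul_assoc]
      exact (LinearMap.range_comp_le_range _ _).trans le_sup_right
  rintro _ ⟨y, rfl⟩
  rw [h.add_pow', LinearMap.sum_apply]
  refine Submodule.sum_mem _ fun ⟨i, j⟩ hij => ?_
  rw [LinearMap.smul_apply]
  exact Submodule.smul_of_tower_mem _ _
    (hterm i j (Finset.HasAntidiagonal.mem_antidiagonal.mp hij) (LinearMap.mem_range_self _ y))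

end TateTrace

theorem tateTrace_add_of_commute_general
    {k V : Type*} [Field k] [AddCommGroup V] [Module k V]
    (φ ψ : V →ₗ[k] V) (hφ : IsFinitePotent φ) (hψ : IsFinitePotent ψ)
    (hcomm : Commute φ ψ) :
    tateTrace (φ + ψ) = tateTrace φ + tateTrace ψ := by
  obtain ⟨n, hn⟩ := hφ
  obtain ⟨m, hm⟩ := hψ
  set W := LinearMap.range (φ ^ n) ⊔ LinearMap.range (ψ ^ m)
  have hφW : ∀ x ∈ W, φ x ∈ W := Module.End.invtSubmodule.sup_mem (f := φ)
    (mapsTo_range_of_commute (Commute.self_pow φ n)) (mapsTo_range_of_commute (hcomm.pow_right m))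
  have hψW : ∀ x ∈ W, ψ x ∈ W := Module.End.invtSubmodule.sup_mem (f := ψ)
    (mapsTo_range_of_commute (hcomm.symm.pow_right n))
    (mapsTo_range_of_commute (Commute.self_pow ψ m))
  have hsumW : ∀ x ∈ W, (φ + ψ) x ∈ W := fun x hx => W.add_mem (hφW x hx) (hψW x hx)
  have hres : (φ + ψ).restrict hsumW = φ.restrict hφW + ψ.restrict hψW := by
    ext x
    rfl
  rw [tateTrace_eq_trace_restrict hsumW (range_add_pow_le_sup hcomm n m),
    tateTrace_eq_trace_restrict hφW (n := n) le_sup_left,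
    tateTrace_eq_trace_restrict hψW (n := m) le_sup_right, hres, map_add]

theorem tateTrace_add_of_commute
    {k V : Type*} [Field k] [AddCommGroup V] [Module k V]
    (φ ψ : V →ₗ[k] V) (hφ : IsFinitePotent φ) (hψ : IsFinitePotent ψ)
    (hcomm : Commute φ ψ) (hsum : IsFinitePotent (φ + ψ)) :
    tateTrace (φ + ψ) = tateTrace φ + tateTrace ψ :=
  tateTrace_add_of_commute_general φ ψ hφ hψ hcomm
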